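/- arXiv:1902.04738 — 2 statements merged into one kernel-verified Lean document; each statement's English description precedes it below -/
import Mathlib

section
/- Let b, r₁, r₂, r₃ be natural numbers with rᵢ ≥ 1 for each i, rᵢ + rⱼ ≤ b for every pair i ≠ j, and r₁ + r₂ + r₃ > b. Let S₁, S₂, S₃ be independent random subsets of Fin b, with Sᵢ uniform over rᵢ-element subsets. Then the probability that S₁, S₂, S₃ are pairwise disjoint is 0, while each pairwise disjointness probability P(Sᵢ ∩ Sⱼ = ∅) is strictly positive. Consequently the three pairwise-disjointness events are not mutually independent: P(all pairwise disjoint) < P(S₁ ∩ S₂ = ∅) · P(S₁ ∩ S₃ = ∅) · P(S₂ ∩ S₃ = ∅). -/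
open Finset

/-- The uniform distribution on the `r`-element subsets of `Fin b` (for `r ≤ b`). -/
noncomputable def uniformSubsets (b r : ℕ) (h : r ≤ b) : PMF (Finset (Fin b)) :=
  PMF.uniformOfFinset (Finset.powersetCard r (Finset.univ : Finset (Fin b)))
    (Finset.powersetCard_nonempty.mpr
      (by simp only [Finset.card_univ, Fintype.card_fin]; omega))

/-- The joint distribution of three independent uniform random subsets of `Fin b`
of sizes `r₁, r₂, r₃`. -/
noncomputable def jointTriple (b r₁ r₂ r₃ : ℕ) (h₁ : r₁ ≤ b) (h₂ : r₂ ≤ b) (h₃ : r₃ ≤ b) :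
    PMF (Finset (Fin b) × Finset (Fin b) × Finset (Fin b)) :=
  (uniformSubsets b r₁ h₁).bind fun A =>
    (uniformSubsets b r₂ h₂).bind fun B =>
      (uniformSubsets b r₃ h₃).map fun C => (A, B, C)

lemma mem_support_jointTriple {b r₁ r₂ r₃ : ℕ} {h₁ : r₁ ≤ b} {h₂ : r₂ ≤ b} {h₃ : r₃ ≤ b}
    {x : Finset (Fin b) × Finset (Fin b) × Finset (Fin b)} :
    x ∈ (jointTriple b r₁ r₂ r₃ h₁ h₂ h₃).support ↔
      x.1.card = r₁ ∧ x.2.1.card = r₂ ∧ x.2.2.card = r₃ := by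
  obtain ⟨A, B, C⟩ := x
  simp only [jointTriple, uniformSubsets, PMF.mem_support_bind_iff,
    PMF.mem_support_map_iff, PMF.support_uniformOfFinset, Finset.mem_coe,
    Finset.mem_powersetCard_univ]
  constructor
  · rintro ⟨a, ha, b', hb, c, hc, h⟩
    injection h with h1 h2
    injection h2 with h2 h3
    subst h1; subst h2; subst h3
    exact ⟨ha, hb, hc⟩
  · rintro ⟨ha, hb, hc⟩
    exact ⟨A, ha, B, hb, C, hc, rfl⟩

/-- An interval in `Fin b`. -/
def finIco (b a c : ℕ) (h : c ≤ b) : Finset (Fin b) :=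
  (Finset.Ico a c).attachFin (fun m hm => lt_of_lt_of_le (Finset.mem_Ico.mp hm).2 h)

lemma card_finIco (b a c : ℕ) (h : c ≤ b) : (finIco b a c h).card = c - a := by
  simp [finIco, Finset.card_attachFin]

lemma disjoint_finIco (b a c d e : ℕ) (h : c ≤ b) (h' : e ≤ b) (hcd : c ≤ d) :
    Disjoint (finIco b a c h) (finIco b d e h') := by
  rw [Finset.disjoint_left]
  intro x hx hx'
  simp only [finIco, Finset.mem_attachFin, Finset.mem_Ico] at hx hx'
  omega

/-- If `rᵢ ≥ 1` for each `i`, `rᵢ + rⱼ ≤ b` for each pair `i ≠ j`, and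
`r₁ + r₂ + r₃ > b`, then for independent uniform random subsets `S₁, S₂, S₃` of
`Fin b` of sizes `r₁, r₂, r₃`: the probability that they are pairwise disjoint is `0`,
each pairwise disjointness probability is strictly positive, and hence the probability
of all three pairwise disjointness events is strictly less than the product of the
three pairwise disjointness probabilities (the events are not mutually independent). -/
theorem mesh_edges_not_three_wise_independent
    (b r₁ r₂ r₃ : ℕ)
    (hr₁ : 1 ≤ r₁) (hr₂ : 1 ≤ r₂) (hr₃ : 1 ≤ r₃)
    (h₁₂ : r₁ + r₂ ≤ b) (h₁₃ : r₁ + r₃ ≤ b) (h₂₃ : r₂ + r₃ ≤ b)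
    (hsum : b < r₁ + r₂ + r₃) :
    (jointTriple b r₁ r₂ r₃ (by omega) (by omega) (by omega)).toOuterMeasure
        {x : Finset (Fin b) × Finset (Fin b) × Finset (Fin b) |
          Disjoint x.1 x.2.1 ∧ Disjoint x.1 x.2.2 ∧ Disjoint x.2.1 x.2.2} = 0 ∧
    0 < (jointTriple b r₁ r₂ r₃ (by omega) (by omega) (by omega)).toOuterMeasure
        {x | Disjoint x.1 x.2.1} ∧
    0 < (jointTriple b r₁ r₂ r₃ (by omega) (by omega) (by omega)).toOuterMeasure
        {x | Disjoint x.1 x.2.2} ∧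
    0 < (jointTriple b r₁ r₂ r₃ (by omega) (by omega) (by omega)).toOuterMeasure
        {x | Disjoint x.2.1 x.2.2} ∧
    (jointTriple b r₁ r₂ r₃ (by omega) (by omega) (by omega)).toOuterMeasure
        {x : Finset (Fin b) × Finset (Fin b) × Finset (Fin b) |
          Disjoint x.1 x.2.1 ∧ Disjoint x.1 x.2.2 ∧ Disjoint x.2.1 x.2.2}
      < (jointTriple b r₁ r₂ r₃ (by omega) (by omega) (by omega)).toOuterMeasure
          {x | Disjoint x.1 x.2.1} *
        (jointTriple b r₁ r₂ r₃ (by omega) (by omega) (by omega)).toOuterMeasure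
          {x | Disjoint x.1 x.2.2} *
        (jointTriple b r₁ r₂ r₃ (by omega) (by omega) (by omega)).toOuterMeasure
          {x | Disjoint x.2.1 x.2.2} := by
  have hb1 : r₁ ≤ b := by omega
  have hb2 : r₂ ≤ b := by omega
  have hb3 : r₃ ≤ b := by omega
  set p := jointTriple b r₁ r₂ r₃ hb1 hb2 hb3 with hp
  have hpos : ∀ (s : Set (Finset (Fin b) × Finset (Fin b) × Finset (Fin b))),
      (∃ x ∈ p.support, x ∈ s) → 0 < p.toOuterMeasure s := by
    intro s ⟨x, hx, hxs⟩
    rw [pos_iff_ne_zero, Ne, PMF.toOuterMeasure_apply_eq_zero_iff, Set.not_disjoint_iff]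
    exact ⟨x, hx, hxs⟩
  have hzero : p.toOuterMeasure
      {x : Finset (Fin b) × Finset (Fin b) × Finset (Fin b) |
        Disjoint x.1 x.2.1 ∧ Disjoint x.1 x.2.2 ∧ Disjoint x.2.1 x.2.2} = 0 := by
    rw [PMF.toOuterMeasure_apply_eq_zero_iff, Set.disjoint_left]
    intro x hx hxs
    rw [mem_support_jointTriple] at hx
    obtain ⟨h1, h2, h3⟩ := hx
    obtain ⟨d12, d13, d23⟩ := hxs
    have hu : (x.1 ∪ x.2.1 ∪ x.2.2).card = r₁ + r₂ + r₃ := by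
      rw [Finset.card_union_of_disjoint (by rw [Finset.disjoint_union_left]; exact ⟨d13, d23⟩),
        Finset.card_union_of_disjoint d12, h1, h2, h3]
    have hle := Finset.card_le_univ (x.1 ∪ x.2.1 ∪ x.2.2)
    simp only [Finset.card_univ, Fintype.card_fin] at hle
    omega
  have w1 : (finIco b 0 r₁ (by omega)).card = r₁ := by rw [card_finIco]; omega
  have w2 : (finIco b 0 r₂ (by omega)).card = r₂ := by rw [card_finIco]; omega
  have w3 : (finIco b 0 r₃ (by omega)).card = r₃ := by rw [card_finIco]; omega
  have w12 : (finIco b r₁ (r₁ + r₂) h₁₂).card = r₂ := by rw [card_finIco]; omega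
  have w13 : (finIco b r₁ (r₁ + r₃) h₁₃).card = r₃ := by rw [card_finIco]; omega
  have w23 : (finIco b r₂ (r₂ + r₃) h₂₃).card = r₃ := by rw [card_finIco]; omega
  have hP12 : 0 < p.toOuterMeasure {x | Disjoint x.1 x.2.1} :=
    hpos _ ⟨(finIco b 0 r₁ (by omega), finIco b r₁ (r₁ + r₂) h₁₂, finIco b 0 r₃ (by omega)),
      mem_support_jointTriple.mpr ⟨w1, w12, w3⟩,
      disjoint_finIco b 0 r₁ r₁ (r₁ + r₂) (by omega) h₁₂ le_rfl⟩
  have hP13 : 0 < p.toOuterMeasure {x | Disjoint x.1 x.2.2} :=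
    hpos _ ⟨(finIco b 0 r₁ (by omega), finIco b 0 r₂ (by omega), finIco b r₁ (r₁ + r₃) h₁₃),
      mem_support_jointTriple.mpr ⟨w1, w2, w13⟩,
      disjoint_finIco b 0 r₁ r₁ (r₁ + r₃) (by omega) h₁₃ le_rfl⟩
  have hP23 : 0 < p.toOuterMeasure {x | Disjoint x.2.1 x.2.2} :=
    hpos _ ⟨(finIco b 0 r₁ (by omega), finIco b 0 r₂ (by omega), finIco b r₂ (r₂ + r₃) h₂₃),
      mem_support_jointTriple.mpr ⟨w1, w2, w23⟩,
      disjoint_finIco b 0 r₂ r₂ (r₂ + r₃) (by omega) h₂₃ le_rfl⟩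
  refine ⟨hzero, hP12, hP13, hP23, ?_⟩
  rw [hzero]
  exact ENNReal.mul_pos (ENNReal.mul_pos hP12.ne' hP13.ne').ne' hP23.ne'
end

section
/- Let q and k be real numbers with 0 < q < 1 and 0 < k, and let t be a natural number with k ≤ t·q. Then q · (∑_{i=0}^{t−1} (1−q)^{2i}) > (1 − exp(−2k)) / 2. -/
open Real Finset

/-- If `0 < q < 1`, `0 < k`, and `t` is a natural number with `k ≤ t * q`, then
`q * ∑_{i=0}^{t-1} (1 - q)^(2i) > (1 - exp (-2k)) / 2`. -/
theorem splitMesher_good_match_prob_bound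
    (q k : ℝ) (hq0 : 0 < q) (hq1 : q < 1) (hk : 0 < k)
    (t : ℕ) (ht : k ≤ t * q) :
    q * (∑ i ∈ Finset.range t, (1 - q) ^ (2 * i)) > (1 - Real.exp (-(2 * k))) / 2 := by
  have h1q : 0 < 1 - q := by linarith
  have ht1 : 1 ≤ t := by
    rcases Nat.eq_zero_or_pos t with h | h
    · exfalso; subst h; simp at ht; linarith
    · exact h
  set r : ℝ := (1 - q) ^ 2 with hr
  have hr0 : 0 ≤ r := sq_nonneg _
  have hr1 : r < 1 := by nlinarith
  have hsum : q * (∑ i ∈ Finset.range t, (1 - q) ^ (2 * i)) = (1 - r ^ t) / (2 - q) := by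
    have hrw : ∀ i, (1 - q) ^ (2 * i) = r ^ i := fun i => by rw [hr, ← pow_mul]
    simp_rw [hrw]
    rw [geom_sum_eq (by linarith)]
    have hne1 : r - 1 ≠ 0 := sub_ne_zero.mpr hr1.ne
    have hne2 : (2 : ℝ) - q ≠ 0 := by linarith
    field_simp
    linear_combination (r ^ t - 1) * hr
  have hexp : r ^ t ≤ Real.exp (-(2 * k)) := by
    have h1 : 1 - q ≤ Real.exp (-q) := by
      have := Real.add_one_le_exp (-q); linarith
    have h2 : r ^ t ≤ (Real.exp (-q)) ^ (2 * t) := by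
      rw [hr, ← pow_mul]
      exact pow_le_pow_left₀ (by linarith) h1 (2 * t)
    have h3 : (Real.exp (-q)) ^ (2 * t) = Real.exp ((2 * t : ℕ) * (-q)) := by
      rw [← Real.exp_nat_mul]
    calc r ^ t ≤ (Real.exp (-q)) ^ (2 * t) := h2
      _ = Real.exp ((2 * t : ℕ) * (-q)) := h3
      _ ≤ Real.exp (-(2 * k)) := by
          apply Real.exp_le_exp.mpr
          push_cast
          nlinarith
  have hexp1 : Real.exp (-(2 * k)) < 1 := by
    rw [Real.exp_lt_one_iff]; linarith
  rw [hsum, gt_iff_lt, div_lt_div_iff₀ (by norm_num) (by linarith)]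
  nlinarith [hexp, hexp1, hq0.le]
end
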